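/- Element-wise H-matrix approximation error: Let 1 < α < 2, c(α) = cos(απ/2)·Γ(2-α), and let τ = [a',b'], σ = [c',d'] with b' < c', x₀ = (a'+b')/2. Suppose for ν ≥ 2 the factors satisfy |C_ν| ≤ (ν(ν-1)/2)(h_i+h_{i+1})|x₀-a'|^{ν-2} and |R_ν| ≤ (1/(2ν!))(∏_{l=1}^ν(α+l-2))(h_j+h_{j+1})(|x₀-a'|+|c'-b'|)^{-(ν+α-1)}. Then for k ≥ 2, |∑_{ν=k}^∞ C_ν R_ν| / (2|c(α)|) ≤ (1/(8|c(α)|)) · k(k-1)(h_i+h_{i+1})(h_j+h_{j+1}) / ((|x₀-a'|+|c'-b'|)^{α-1} |x₀-a'|²) · r^k / (1-r)³, where r = |x₀-a'|/(|x₀-a'|+|c'-b'|). -/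

import Mathlib

/-! Since `1 ≤ α ≤ 2`, each factor `α + l - 2` is at most `l`, so the product in the bound on
`R_ν` is at most `ν!`, and the `ν`-th term is at most `(ν choose 2) E r^ν / 2` with
`E = (hᵢ+hᵢ₊₁)(hⱼ+hⱼ₊₁) / (D^{α-1} |x₀-a'|²)` and `D = |x₀-a'| + |c'-b'|`. Writing `ν = k + n`,
the estimate `(k+n choose 2) ≤ (k choose 2)(n+2 choose 2)` dominates the tail by a multiple of
`∑ₙ (n+2 choose 2) rⁿ = (1-r)⁻³`. -/

open Real

theorem prod_Icc_add_sub_two_le_factorial {α : ℝ} (hα₁ : 1 ≤ α) (hα₂ : α ≤ 2) (ν : ℕ) :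
    ∏ l ∈ Finset.Icc 1 ν, (α + (l : ℝ) - 2) ≤ ν.factorial := by
  calc ∏ l ∈ Finset.Icc 1 ν, (α + (l : ℝ) - 2)
      ≤ ∏ l ∈ Finset.Icc 1 ν, (l : ℝ) := by
        refine Finset.prod_le_prod (fun l hl => ?_) fun l _ => by linarith
        have : (1 : ℝ) ≤ l := by exact_mod_cast (Finset.mem_Icc.mp hl).1
        linarith
    _ = ν.factorial := by
        rw [← Nat.cast_prod, ← Finset.Ico_add_one_right_eq_Icc, Finset.prod_Ico_id_eq_factorial]

theorem choose_add_le_choose_mul_choose_add_two {k : ℕ} (hk : 2 ≤ k) (n : ℕ) :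
    (k + n).choose 2 ≤ k.choose 2 * (n + 2).choose 2 := by
  have hk' : (2 : ℝ) ≤ k := by exact_mod_cast hk
  have hn : (0 : ℝ) ≤ n := n.cast_nonneg
  suffices ((k + n).choose 2 : ℝ) ≤ k.choose 2 * (n + 2).choose 2 by exact_mod_cast this
  simp only [Nat.cast_choose_two]
  push_cast
  nlinarith [mul_nonneg hn (sub_nonneg.mpr hk'), mul_nonneg (mul_nonneg hn hn) (sub_nonneg.mpr hk')]

theorem pow_sub_two_mul_rpow_neg {A D : ℝ} (hA : 0 < A) (hD : 0 < D) {ν : ℕ} (hν : 2 ≤ ν) (β : ℝ) :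
    A ^ (ν - 2) * D ^ (-((ν : ℝ) + β)) = (A / D) ^ ν / (D ^ β * A ^ 2) := by
  have hsplit : A ^ ν = A ^ (ν - 2) * A ^ 2 := by rw [← pow_add, Nat.sub_add_cancel hν]
  rw [neg_add, rpow_add hD, rpow_neg hD.le, rpow_neg hD.le, rpow_natCast, div_pow, hsplit]
  field_simp

theorem abs_tsum_le_of_abs_le_choose_two_mul_geometric {f : ℕ → ℝ} {Q r : ℝ}
    (hr₀ : 0 ≤ r) (hr₁ : r < 1) (hf : ∀ n, |f n| ≤ Q * ((n + 2).choose 2 * r ^ n)) :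
    |∑' n, f n| ≤ Q / (1 - r) ^ 3 := by
  have hgeom : HasSum (fun n : ℕ => ((n + 2).choose 2 : ℝ) * r ^ n) (1 / (1 - r) ^ 3) :=
    hasSum_choose_mul_geometric_of_norm_lt_one 2 (by rwa [norm_of_nonneg hr₀])
  simpa [div_eq_mul_inv] using
    tsum_of_norm_bounded (hgeom.mul_left Q) fun n => (norm_eq_abs (f n)).trans_le (hf n)

theorem abs_mul_le_of_factor_bounds {α H H' A D c ρ : ℝ} {ν : ℕ} (hα₁ : 1 ≤ α) (hα₂ : α ≤ 2)
    (hA : 0 < A) (hD : 0 < D) (hH' : 0 ≤ H') (hν : 2 ≤ ν)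
    (hc : |c| ≤ ((ν : ℝ) * ((ν : ℝ) - 1) / 2) * H * A ^ (ν - 2))
    (hρ : |ρ| ≤ (1 / (2 * (ν.factorial : ℝ))) * (∏ l ∈ Finset.Icc 1 ν, (α + (l : ℝ) - 2)) *
      H' * D ^ (-((ν : ℝ) + α - 1))) :
    |c * ρ| ≤ ν.choose 2 * (H * H' / (D ^ (α - 1) * A ^ 2)) / 2 * (A / D) ^ ν := by
  set P := ∏ l ∈ Finset.Icc 1 ν, (α + (l : ℝ) - 2)
  have hP : P / ν.factorial ≤ 1 :=
    (div_le_one (by exact_mod_cast ν.factorial_pos)).mpr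
      (prod_Icc_add_sub_two_le_factorial hα₁ hα₂ ν)
  have hρ' : |ρ| ≤ H' * D ^ (-((ν : ℝ) + (α - 1))) / 2 :=
    calc |ρ| ≤ _ := hρ
      _ = P / ν.factorial * (H' * D ^ (-((ν : ℝ) + (α - 1))) / 2) := by
          rw [add_sub_assoc]; ring
      _ ≤ _ := mul_le_of_le_one_left (by positivity) hP
  calc |c * ρ| = |c| * |ρ| := abs_mul c ρ
    _ ≤ ((ν : ℝ) * ((ν : ℝ) - 1) / 2 * H * A ^ (ν - 2)) * (H' * D ^ (-((ν : ℝ) + (α - 1))) / 2) :=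
        mul_le_mul hc hρ' (abs_nonneg ρ) ((abs_nonneg c).trans hc)
    _ = ν.choose 2 * (H * H' / (D ^ (α - 1) * A ^ 2)) / 2 * (A / D) ^ ν := by
        rw [Nat.cast_choose_two]
        linear_combination ((ν : ℝ) * ((ν : ℝ) - 1) / 2 * H * H' / 2) *
          pow_sub_two_mul_rpow_neg hA hD hν (α - 1)

/-- Element-wise H-matrix approximation error. With `c(α) = cos(απ/2) Γ(2-α)`,
`D = |x₀-a'| + |c'-b'|` and `r = |x₀-a'| / D`, if the factors satisfy
`|C_ν| ≤ (ν(ν-1)/2)(hᵢ+hᵢ₊₁)|x₀-a'|^{ν-2}` and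
`|R_ν| ≤ (1/(2ν!)) (∏_{l=1}^ν (α+l-2)) (hⱼ+hⱼ₊₁) D^{-(ν+α-1)}` for all `ν ≥ 2`,
then for `k ≥ 2`,
`|∑_{ν=k}^∞ C_ν R_ν| / (2|c(α)|) ≤
  (1/(8|c(α)|)) k(k-1)(hᵢ+hᵢ₊₁)(hⱼ+hⱼ₊₁) / (D^{α-1} |x₀-a'|²) · r^k / (1-r)³`. -/
theorem element_wise_error (α : ℝ) (hα₁ : 1 < α) (hα₂ : α < 2)
    (hi hi1 hj hj1 : ℝ) (hhi : 0 < hi) (hhi1 : 0 < hi1) (hhj : 0 < hj) (hhj1 : 0 < hj1)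
    (a' b' c' : ℝ) (hab : a' < b') (hbc : b' < c')
    (x₀ : ℝ) (hx₀ : x₀ = (a' + b') / 2)
    (C R : ℕ → ℝ)
    (hC : ∀ ν : ℕ, 2 ≤ ν →
      |C ν| ≤ ((ν : ℝ) * ((ν : ℝ) - 1) / 2) * (hi + hi1) * |x₀ - a'| ^ (ν - 2))
    (hR : ∀ ν : ℕ, 2 ≤ ν →
      |R ν| ≤ (1 / (2 * (Nat.factorial ν : ℝ))) * (∏ l ∈ Finset.Icc 1 ν, (α + (l : ℝ) - 2)) *
        (hj + hj1) * (|x₀ - a'| + |c' - b'|) ^ (-((ν : ℝ) + α - 1)))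
    (k : ℕ) (hk : 2 ≤ k) :
    |∑' n : ℕ, C (k + n) * R (k + n)| / (2 * |Real.cos (α * π / 2) * Real.Gamma (2 - α)|) ≤
      (1 / (8 * |Real.cos (α * π / 2) * Real.Gamma (2 - α)|)) *
        ((k : ℝ) * ((k : ℝ) - 1) * (hi + hi1) * (hj + hj1) /
          ((|x₀ - a'| + |c' - b'|) ^ (α - 1) * |x₀ - a'| ^ 2)) *
        ((|x₀ - a'| / (|x₀ - a'| + |c' - b'|)) ^ k /
          (1 - |x₀ - a'| / (|x₀ - a'| + |c' - b'|)) ^ 3) := by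
  set A := |x₀ - a'|
  set D := A + |c' - b'|
  have hA : 0 < A := abs_pos.mpr (by rw [hx₀]; linarith)
  have hB : 0 < |c' - b'| := abs_pos.mpr (by linarith)
  have hD : 0 < D := by positivity
  set r := A / D
  have hr₁ : r < 1 := (div_lt_one hD).mpr (by linarith)
  set E := (hi + hi1) * (hj + hj1) / (D ^ (α - 1) * A ^ 2)
  have hterm (n : ℕ) :
      |C (k + n) * R (k + n)| ≤ k.choose 2 * E / 2 * r ^ k * ((n + 2).choose 2 * r ^ n) := by
    have hν : 2 ≤ k + n := hk.trans (Nat.le_add_right k n)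
    calc |C (k + n) * R (k + n)| ≤ (k + n).choose 2 * E / 2 * r ^ (k + n) :=
          abs_mul_le_of_factor_bounds hα₁.le hα₂.le hA hD (by positivity) hν (hC _ hν) (hR _ hν)
      _ ≤ (k.choose 2 * (n + 2).choose 2 : ℕ) * E / 2 * r ^ (k + n) := by
          gcongr
          exact choose_add_le_choose_mul_choose_add_two hk n
      _ = k.choose 2 * E / 2 * r ^ k * ((n + 2).choose 2 * r ^ n) := by push_cast; ring
  calc |∑' n : ℕ, C (k + n) * R (k + n)| / (2 * |cos (α * π / 2) * Gamma (2 - α)|)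
      ≤ k.choose 2 * E / 2 * r ^ k / (1 - r) ^ 3 / (2 * |cos (α * π / 2) * Gamma (2 - α)|) := by
        gcongr
        exact abs_tsum_le_of_abs_le_choose_two_mul_geometric (by positivity) hr₁ hterm
    _ = _ := by rw [Nat.cast_choose_two]; ring
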